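/- Let (X, μ) be a measure space with μ a finite measure, let f : X → ℝ be measurable with |f(x)| ≤ C for all x (C > 0), and let v : X → ℝ be measurable with 1 ≤ v(x) ≤ C′ for all x (C′ ≥ 1). If μ({x | f(x) > 0}) > 0, then the integral ∫_X f(x)·log(√(a² + f(x)²/v(x)²) − f(x)/v(x)) dμ(x) tends to −∞ as a → 0⁺. -/

import Mathlib

/-!
Write `φ = √(a² + t²) - t` with `t = f / v`, so that `φ > 0` and
`φ · (√(a² + t²) + t) = a²`. Where `f > 0` this gives `φ ≤ a² v / (2 f)`, hence
`f log φ ≤ 2 f log a + O(1)`; where `f ≤ 0`, `φ ≥ -2 f / v` keeps `f log φ` bounded above,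
because `-u log u ≤ 1`. So the integral is at most `2 log a ∫ f⁺ + const`, which tends to `-∞`
because `∫ f⁺ > 0`.
-/

open Filter Real MeasureTheory Topology Set

theorem mul_log_le_of_two_mul_mul_le {y z b : ℝ} (hy : 0 < y) (hz : 0 < z) (h : 2 * y * z ≤ b) :
    y * log z ≤ y * log b + 1 / 2 := by
  have hlog : log z ≤ log b - log (2 * y) := by
    rw [← log_div (by nlinarith) (by positivity)]
    exact log_le_log hz (by rwa [le_div_iff₀ (by positivity), mul_comm])
  have hneg : negMulLog (2 * y) ≤ 1 :=
    (negMulLog_le_one_sub_self (by positivity)).trans (by linarith)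
  rw [negMulLog] at hneg
  nlinarith [mul_le_mul_of_nonneg_left hlog hy.le]

theorem mul_log_le_of_neg_le_mul {y z c : ℝ} (hy : y ≤ 0) (hz : 0 < z) (h : -y ≤ c * z) :
    y * log z ≤ c := by
  rcases hy.eq_or_lt with rfl | hy
  · simpa using nonneg_of_mul_nonneg_left (by simpa using h) hz
  have hc : 0 < c := pos_of_mul_pos_left (by linarith) hz.le
  set u := -y / c
  have hu : 0 < u := div_pos (by linarith) hc
  have hy_eq : y = -(c * u) := by simp only [u]; field_simp
  calc y * log z ≤ y * log u :=
        mul_le_mul_of_nonpos_left (log_le_log hu ((div_le_iff₀' hc).2 h)) hy.le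
    _ = c * negMulLog u := by rw [hy_eq, negMulLog]; ring
    _ ≤ c := by nlinarith [negMulLog_le_one_sub_self hu.le]

theorem sqrt_sq_add_sq_sub_pos {a : ℝ} (ha : a ≠ 0) (t : ℝ) : 0 < √(a ^ 2 + t ^ 2) - t := by
  have : |t| < √(a ^ 2 + t ^ 2) := by
    rw [lt_sqrt (abs_nonneg t), sq_abs]
    linarith [sq_pos_of_ne_zero ha]
  linarith [le_abs_self t]

theorem neg_two_mul_le_sqrt_sq_add_sq_sub (a t : ℝ) : -(2 * t) ≤ √(a ^ 2 + t ^ 2) - t := by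
  have : |t| ≤ √(a ^ 2 + t ^ 2) := abs_le_sqrt (by nlinarith)
  linarith [neg_le_abs t]

theorem two_mul_mul_sqrt_sq_add_sq_sub_le (a t : ℝ) :
    2 * t * (√(a ^ 2 + t ^ 2) - t) ≤ a ^ 2 := by
  have hsq := sq_sqrt (by positivity : 0 ≤ a ^ 2 + t ^ 2)
  have : t ≤ √(a ^ 2 + t ^ 2) := le_sqrt_of_sq_le (by nlinarith)
  nlinarith

theorem mul_log_sqrt_sub_le {a y w C W : ℝ} (ha : a ≠ 0) (hy : |y| ≤ C) (hw : 1 ≤ w)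
    (hwW : w ≤ W) :
    y * log (√(a ^ 2 + y ^ 2 / w ^ 2) - y / w) ≤
      log a * (2 * max y 0) + (C * log W + 1 / 2 + W / 2) := by
  have hw0 : 0 < w := by linarith
  have hC : 0 ≤ C := (abs_nonneg y).trans hy
  rw [← div_pow]
  set φ := √(a ^ 2 + (y / w) ^ 2) - y / w
  have hφ : 0 < φ := sqrt_sq_add_sq_sub_pos ha (y / w)
  rcases le_or_gt y 0 with hy0 | hy0
  · have hneg : -y ≤ W / 2 * φ :=
      calc -y = w / 2 * -(2 * (y / w)) := by field_simp
        _ ≤ w / 2 * φ := by gcongr; exact neg_two_mul_le_sqrt_sq_add_sq_sub a (y / w)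
        _ ≤ W / 2 * φ := by gcongr
    have := mul_log_le_of_neg_le_mul hy0 hφ hneg
    rw [max_eq_right hy0]
    nlinarith [log_nonneg (hw.trans hwW)]
  · have hyφ : 2 * y * φ ≤ a ^ 2 * w :=
      calc 2 * y * φ = w * (2 * (y / w) * φ) := by field_simp
        _ ≤ w * a ^ 2 := by gcongr; exact two_mul_mul_sqrt_sq_add_sq_sub_le a (y / w)
        _ = a ^ 2 * w := mul_comm _ _
    have hmain := mul_log_le_of_two_mul_mul_le hy0 hφ hyφ
    rw [log_mul (pow_ne_zero 2 ha) hw0.ne', log_pow] at hmain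
    have hyw : y * log w ≤ C * log W :=
      mul_le_mul ((le_abs_self y).trans hy) (log_le_log hw0 hwW) (log_nonneg hw) hC
    rw [max_eq_left hy0.le]
    push_cast at hmain
    nlinarith

section Integral

variable {X : Type*} [MeasurableSpace X] {μ : Measure X} [IsFiniteMeasure μ]

theorem integrable_mul_log_sqrt_sub {f v : X → ℝ} {a C W : ℝ} (ha : a ≠ 0) (hf : Measurable f)
    (hv : Measurable v) (hfC : ∀ x, |f x| ≤ C) (hv1 : ∀ x, 1 ≤ v x) (hvW : ∀ x, v x ≤ W) :
    Integrable (fun x => f x * log (√(a ^ 2 + f x ^ 2 / v x ^ 2) - f x / v x)) μ := by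
  have hF : ContinuousOn
      (fun p : ℝ × ℝ => p.1 * log (√(a ^ 2 + p.1 ^ 2 / p.2 ^ 2) - p.1 / p.2))
      (Icc (-C) C ×ˢ Icc 1 W) := fun p hp => by
    have hp2 : p.2 ≠ 0 := by linarith [hp.2.1]
    have hφ : √(a ^ 2 + p.1 ^ 2 / p.2 ^ 2) - p.1 / p.2 ≠ 0 := by
      rw [← div_pow]; exact (sqrt_sq_add_sq_sub_pos ha _).ne'
    exact (by fun_prop (disch := first | assumption | positivity) : ContinuousAt _ p)
      |>.continuousWithinAt
  obtain ⟨M, hM⟩ := (isCompact_Icc.prod isCompact_Icc).exists_bound_of_continuousOn hF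
  exact .of_bound (by fun_prop) M
    (ae_of_all _ fun x => hM (f x, v x) ⟨abs_le.1 (hfC x), hv1 x, hvW x⟩)

theorem tendsto_integral_atBot_of_le_log_mul_add {F : ℝ → X → ℝ} {g : X → ℝ} {K : ℝ}
    (hF : ∀ a > 0, Integrable (F a) μ) (hg : Integrable g μ) (hg0 : 0 < ∫ x, g x ∂μ)
    (hFg : ∀ a > 0, ∀ x, F a x ≤ log a * g x + K) :
    Tendsto (fun a => ∫ x, F a x ∂μ) (𝓝[>] 0) atBot := by
  have hlim : Tendsto (fun a => log a * ∫ x, g x ∂μ + K * μ.real univ) (𝓝[>] 0) atBot :=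
    tendsto_atBot_add_const_right _ _ (tendsto_log_nhdsGT_zero.atBot_mul_const hg0)
  refine tendsto_atBot_mono' _ (eventually_mem_nhdsWithin.mono fun a (ha : 0 < a) => ?_) hlim
  calc ∫ x, F a x ∂μ ≤ ∫ x, (log a * g x + K) ∂μ :=
        integral_mono (hF a ha) ((hg.const_mul _).add (integrable_const K)) (hFg a ha)
    _ = log a * ∫ x, g x ∂μ + K * μ.real univ := by
        rw [integral_add (hg.const_mul _) (integrable_const K), integral_const_mul,
          integral_const, smul_eq_mul, mul_comm K]

end Integral

theorem weighted_integral_tendsto_atBot_general {X : Type*} [MeasurableSpace X] (μ : Measure X)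
    [IsFiniteMeasure μ] (f v : X → ℝ) (hf : Measurable f) (hv : Measurable v)
    (C : ℝ) (hfC : ∀ x, |f x| ≤ C)
    (C' : ℝ) (hv1 : ∀ x, 1 ≤ v x) (hvC' : ∀ x, v x ≤ C')
    (hpos : 0 < μ {x | 0 < f x}) :
    Tendsto (fun a : ℝ =>
        ∫ x, f x * Real.log (Real.sqrt (a ^ 2 + (f x) ^ 2 / (v x) ^ 2) - f x / v x) ∂μ)
      (nhdsWithin 0 (Set.Ioi 0)) atBot := by
  have hfint : Integrable f μ :=
    .of_bound hf.aestronglyMeasurable C (ae_of_all _ fun x => (norm_eq_abs _).trans_le (hfC x))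
  have hpos_part : 0 < ∫ x, 2 * max (f x) 0 ∂μ := by
    rw [integral_const_mul]
    refine mul_pos two_pos
      ((integral_pos_iff_support_of_nonneg (fun x => le_max_right _ _) hfint.pos_part).2 ?_)
    exact hpos.trans_le (measure_mono fun x hx => (lt_max_of_lt_left hx).ne')
  exact tendsto_integral_atBot_of_le_log_mul_add
    (fun a ha => integrable_mul_log_sqrt_sub ha.ne' hf hv hfC hv1 hvC')
    (hfint.pos_part.const_mul 2) hpos_part
    (fun a ha x => mul_log_sqrt_sub_le ha.ne' (hfC x) (hv1 x) (hvC' x))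

/-- Weighted form: if `μ` is a finite measure, `f` is measurable with `|f| ≤ C` (`C > 0`),
`v` is measurable with `1 ≤ v ≤ C′` (`C′ ≥ 1`), and `μ {f > 0} > 0`, then
`∫ f · log (√(a² + f²/v²) − f/v) dμ → −∞` as `a → 0⁺`. -/
theorem weighted_integral_tendsto_atBot {X : Type*} [MeasurableSpace X] (μ : Measure X)
    [IsFiniteMeasure μ] (f v : X → ℝ) (hf : Measurable f) (hv : Measurable v)
    (C : ℝ) (hC : 0 < C) (hfC : ∀ x, |f x| ≤ C)
    (C' : ℝ) (hC' : 1 ≤ C') (hv1 : ∀ x, 1 ≤ v x) (hvC' : ∀ x, v x ≤ C')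
    (hpos : 0 < μ {x | 0 < f x}) :
    Tendsto (fun a : ℝ =>
        ∫ x, f x * Real.log (Real.sqrt (a ^ 2 + (f x) ^ 2 / (v x) ^ 2) - f x / v x) ∂μ)
      (nhdsWithin 0 (Set.Ioi 0)) atBot :=
  weighted_integral_tendsto_atBot_general μ f v hf hv C hfC C' hv1 hvC' hpos
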